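/- arXiv:2302.01021 — 5 statements merged into one kernel-verified Lean document; each statement's English description precedes it below -/
import Mathlib

section
/- Let τ ≥ 1 be an integer. For λ in (0, λ_b] with λ_b = τ^τ/(τ+1)^{τ+1}, the largest real root of h(z) = z^{τ+1} - z^τ + λ lying in (0,1) is a strictly decreasing function of λ. -/
/-- For λ ∈ (0, λ_b], the largest real root of h(z) = z^{τ+1} - z^τ + λ in (0,1)
is strictly decreasing in λ. -/
theorem stmt_5 (τ : ℕ) (hτ : 1 ≤ τ) (lam₁ lam₂ r₁ r₂ : ℝ)
    (h₁ : 0 < lam₁) (h₁b : lam₁ ≤ (τ : ℝ) ^ τ / ((τ : ℝ) + 1) ^ (τ + 1))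
    (h₂ : 0 < lam₂) (h₂b : lam₂ ≤ (τ : ℝ) ^ τ / ((τ : ℝ) + 1) ^ (τ + 1))
    (hr₁ : IsGreatest {z : ℝ | z ∈ Set.Ioo (0 : ℝ) 1 ∧ z ^ (τ + 1) - z ^ τ + lam₁ = 0} r₁)
    (hr₂ : IsGreatest {z : ℝ | z ∈ Set.Ioo (0 : ℝ) 1 ∧ z ^ (τ + 1) - z ^ τ + lam₂ = 0} r₂)
    (hlt : lam₁ < lam₂) :
    r₂ < r₁ := by
  obtain ⟨⟨⟨hr₂0, hr₂1⟩, hroot₂⟩, -⟩ := hr₂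
  set g : ℝ → ℝ := fun z => z ^ τ - z ^ (τ + 1) with hg
  have hcont : ContinuousOn g (Set.Icc r₂ 1) := by
    apply Continuous.continuousOn
    continuity
  have hg1 : g 1 = 0 := by simp [hg]
  have hgr₂ : g r₂ = lam₂ := by simp only [hg]; linarith
  have hmem : lam₁ ∈ Set.Ioo (g 1) (g r₂) := by
    rw [hg1, hgr₂]; exact ⟨h₁, hlt⟩
  have hsub := intermediate_value_Ioo' (le_of_lt hr₂1) hcont hmem
  obtain ⟨z, ⟨hz1, hz2⟩, hz3⟩ := hsub
  have hz : z ∈ {z : ℝ | z ∈ Set.Ioo (0 : ℝ) 1 ∧ z ^ (τ + 1) - z ^ τ + lam₁ = 0} := by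
    refine ⟨⟨lt_trans hr₂0 hz1, hz2⟩, ?_⟩
    simp only [hg] at hz3
    linarith
  exact lt_of_lt_of_le hz1 (hr₁.2 hz)
end

section
/- Let τ ≥ 1 be an integer. For λ in (0, λ_b] with λ_b = τ^τ/(τ+1)^{τ+1}, the smallest positive real root of h(z) = z^{τ+1} - z^τ + λ is a strictly increasing function of λ. -/
/-- For λ ∈ (0, λ_b], the smallest positive real root of h(z) = z^{τ+1} - z^τ + λ
is strictly increasing in λ. -/
theorem stmt_6 (τ : ℕ) (hτ : 1 ≤ τ) (lam₁ lam₂ s₁ s₂ : ℝ)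
    (h₁ : 0 < lam₁) (h₁b : lam₁ ≤ (τ : ℝ) ^ τ / ((τ : ℝ) + 1) ^ (τ + 1))
    (h₂ : 0 < lam₂) (h₂b : lam₂ ≤ (τ : ℝ) ^ τ / ((τ : ℝ) + 1) ^ (τ + 1))
    (hs₁ : IsLeast {z : ℝ | 0 < z ∧ z ^ (τ + 1) - z ^ τ + lam₁ = 0} s₁)
    (hs₂ : IsLeast {z : ℝ | 0 < z ∧ z ^ (τ + 1) - z ^ τ + lam₂ = 0} s₂)
    (hlt : lam₁ < lam₂) :
    s₁ < s₂ := by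
  obtain ⟨⟨hs₂pos, hs₂eq⟩, -⟩ := hs₂
  obtain ⟨-, hs₁lb⟩ := hs₁
  set f : ℝ → ℝ := fun z => z ^ (τ + 1) - z ^ τ + lam₁ with hf
  have hcont : ContinuousOn f (Set.Icc 0 s₂) :=
    (by fun_prop : Continuous f).continuousOn
  have hτ0 : τ ≠ 0 := by omega
  have hf0 : f 0 = lam₁ := by simp [hf, zero_pow hτ0]
  have hfs₂ : f s₂ = lam₁ - lam₂ := by simp only [hf]; linarith
  have hmem : (0 : ℝ) ∈ Set.Ioo (f s₂) (f 0) := by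
    rw [hf0, hfs₂]; constructor <;> linarith
  obtain ⟨c, hc, hfc⟩ := intermediate_value_Ioo' hs₂pos.le hcont hmem
  have hs₁c : s₁ ≤ c := hs₁lb ⟨hc.1, hfc⟩
  exact lt_of_le_of_lt hs₁c hc.2
end

section
/- For even τ ≥ 2, the unique negative real root of h(z) = z^{τ+1} - z^τ + λ is strictly decreasing in λ for λ > 0; equivalently, its modulus is strictly increasing in λ. -/
/-- For even τ ≥ 2, the unique negative real root of h(z) = z^{τ+1} - z^τ + λ is
strictly decreasing in λ for λ > 0 (so its modulus is strictly increasing). -/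
theorem stmt_7 (τ : ℕ) (hτ : 2 ≤ τ) (heven : Even τ) (lam₁ lam₂ z₁ z₂ : ℝ)
    (h₁ : 0 < lam₁) (h₂ : 0 < lam₂) (hlt : lam₁ < lam₂)
    (hz₁ : z₁ < 0 ∧ z₁ ^ (τ + 1) - z₁ ^ τ + lam₁ = 0)
    (hz₂ : z₂ < 0 ∧ z₂ ^ (τ + 1) - z₂ ^ τ + lam₂ = 0) :
    z₂ < z₁ ∧ |z₁| < |z₂| := by
  obtain ⟨hz1n, he1⟩ := hz₁
  obtain ⟨hz2n, he2⟩ := hz₂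
  have hs1 : z₁ ^ (τ + 1) = z₁ ^ τ * z₁ := pow_succ _ _
  have hs2 : z₂ ^ (τ + 1) = z₂ ^ τ * z₂ := pow_succ _ _
  have hkey : z₂ < z₁ := by
    by_contra h
    push_neg at h
    have habs : |z₂| ≤ |z₁| := by
      rw [abs_of_neg hz1n, abs_of_neg hz2n]; linarith
    have h2t : z₂ ^ τ ≤ z₁ ^ τ := by
      have := pow_le_pow_left₀ (abs_nonneg z₂) habs τ
      rwa [heven.pow_abs, heven.pow_abs] at this
    have hp2 : (0:ℝ) < z₂ ^ τ := heven.pow_pos (ne_of_lt hz2n)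
    have hmul : z₂ ^ τ * (1 - z₂) ≤ z₁ ^ τ * (1 - z₁) :=
      mul_le_mul h2t (by linarith) (by linarith) (by linarith [hp2])
    nlinarith
  refine ⟨hkey, ?_⟩
  rw [abs_of_neg hz1n, abs_of_neg hz2n]
  linarith
end

section
/- Let τ ≥ 1 be an integer and λ = 2 sin(π/(2(2τ+1))). Then z = e^{iφ} with φ = π/(2τ+1) is a root of h(z) = z^{τ+1} - z^τ + λ; i.e., at the stability threshold the characteristic polynomial has a root on the unit circle. -/
open Real in
/-- At the stability threshold λ = 2 sin(π/(2(2τ+1))), the characteristic polynomial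
z^{τ+1} - z^τ + λ has the root z = e^{iπ/(2τ+1)} on the unit circle. -/
theorem stmt_11 (τ : ℕ) (hτ : 1 ≤ τ) :
    (Complex.exp ((π / (2 * (τ : ℝ) + 1) : ℝ) * Complex.I)) ^ (τ + 1)
      - (Complex.exp ((π / (2 * (τ : ℝ) + 1) : ℝ) * Complex.I)) ^ τ
      + ((2 * Real.sin (π / (2 * (2 * (τ : ℝ) + 1))) : ℝ) : ℂ) = 0 := by
  have hc : (2 * (τ : ℝ) + 1) ≠ 0 := by positivity
  set θ : ℝ := π / (2 * (τ : ℝ) + 1) with hθdef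
  have key : ∀ n : ℕ, Complex.exp ((θ : ℂ) * Complex.I) ^ n
      = ((Real.cos ((n : ℝ) * θ) : ℝ) : ℂ) + ((Real.sin ((n : ℝ) * θ) : ℝ) : ℂ) * Complex.I := by
    intro n
    rw [← Complex.exp_nat_mul]
    have : (n : ℂ) * ((θ : ℂ) * Complex.I) = (((n : ℝ) * θ : ℝ) : ℂ) * Complex.I := by
      push_cast; ring
    rw [this, Complex.exp_mul_I, Complex.ofReal_cos, Complex.ofReal_sin]
  rw [key, key]
  have hπ : (2 * (τ : ℝ) + 1) * θ = π := by
    rw [hθdef]; field_simp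
  have ha : ((τ : ℝ) + 1) * θ = π / 2 + θ / 2 := by linarith
  have hb : (τ : ℝ) * θ = π - ((τ : ℝ) + 1) * θ := by linarith
  have hcos : Real.cos ((τ : ℝ) * θ) = - Real.cos (((τ : ℝ) + 1) * θ) := by
    rw [hb, Real.cos_pi_sub]
  have hsin : Real.sin ((τ : ℝ) * θ) = Real.sin (((τ : ℝ) + 1) * θ) := by
    rw [hb, Real.sin_pi_sub]
  have hca : Real.cos (((τ : ℝ) + 1) * θ) = - Real.sin (θ / 2) := by
    rw [ha, Real.cos_add, Real.cos_pi_div_two, Real.sin_pi_div_two]; ring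
  have hs : π / (2 * (2 * (τ : ℝ) + 1)) = θ / 2 := by
    rw [hθdef]; field_simp
  have hn1 : ((τ + 1 : ℕ) : ℝ) = (τ : ℝ) + 1 := by push_cast; ring
  rw [hn1, hs, hcos, hsin, hca]
  push_cast
  ring
end

section
/- Let K be a real symmetric N×N matrix with K𝟙 = 0, and suppose all nonzero eigenvalues λ of K satisfy 0 < λ < 2 sin(π/(2(2τ+1))) for an integer delay τ ≥ 1. Then every root z of z^{τ+1} − z^τ + λ = 0 (for each nonzero eigenvalue λ of K) satisfies |z| < 1. -/
/-!
Suppose `z ^ n * (1 - z) = λ` with `‖z‖ ≥ 1` and `0 < λ < 2 sin φ`, where `φ = π / (2(2n+1))`.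
Then `‖z - 1‖ ≤ λ < 2 sin φ`, which confines `z` to the sector `|arg z| ≤ 2φ`; since
`n · 2φ = π/2 - φ`, this gives `Re (z ^ n) ≥ ‖z‖ ^ n cos (π/2 - φ) ≥ sin φ > λ / 2`.
On the other hand `Re (z ^ n) = λ Re (1 - z)⁻¹ ≤ λ / 2`, because `w ↦ (1 - w)⁻¹` maps the
exterior of the unit disc into the half-plane `Re ≤ 1/2`.
-/

open Real

namespace Complex

theorem re_pow_eq_norm_pow_mul_cos (z : ℂ) (n : ℕ) :
    (z ^ n).re = ‖z‖ ^ n * Real.cos (n * arg z) := by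
  rw [← norm_mul_cos_arg, norm_pow, ← Real.Angle.cos_coe, arg_pow_coe_angle,
    ← Real.Angle.coe_nsmul, Real.Angle.cos_coe, nsmul_eq_mul]

theorem re_inv_one_sub_le_half {z : ℂ} (hz : 1 ≤ ‖z‖) : (1 - z)⁻¹.re ≤ 1 / 2 := by
  have hnorm : 1 ≤ normSq z := by rw [normSq_eq_norm_sq]; nlinarith
  rw [inv_re]
  refine div_le_of_le_mul₀ (normSq_nonneg _) (by norm_num) ?_
  simp only [normSq_apply, sub_re, sub_im, one_re, one_im] at hnorm ⊢
  nlinarith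

theorem abs_arg_le_two_mul {z : ℂ} {φ : ℝ} (hφ₀ : 0 ≤ φ) (hφ : φ ≤ π / 2) (hz : 1 ≤ ‖z‖)
    (h : ‖z - 1‖ ≤ 2 * Real.sin φ) : |arg z| ≤ 2 * φ := by
  have hsin : 0 ≤ Real.sin φ := Real.sin_nonneg_of_nonneg_of_le_pi hφ₀ (by linarith [pi_pos])
  have hsq : ‖z - 1‖ ^ 2 ≤ 4 * Real.sin φ ^ 2 := by nlinarith [norm_nonneg (z - 1)]
  have hdist : ‖z - 1‖ ^ 2 = ‖z‖ ^ 2 - 2 * z.re + 1 := by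
    simp only [← normSq_eq_norm_sq, normSq_sub, map_one, mul_one]; ring
  have hcos : Real.cos (2 * φ) ≤ Real.cos |arg z| := by
    rw [Real.cos_abs, Real.cos_two_mul, Real.cos_sq', ← norm_mul_cos_arg z] at *
    nlinarith [mul_nonneg (sub_nonneg.2 hz) (sub_nonneg.2 (Real.cos_le_one (arg z)))]
  exact (Real.strictAntiOn_cos.le_iff_ge ⟨by positivity, by linarith⟩
    ⟨abs_nonneg _, abs_arg_le_pi z⟩).1 hcos

theorem norm_lt_one_of_pow_succ_sub_pow_add_eq_zero {n : ℕ} {lam : ℝ} (hlam₀ : 0 < lam)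
    (hlam : lam < 2 * Real.sin (π / (2 * (2 * n + 1)))) {z : ℂ}
    (hz : z ^ (n + 1) - z ^ n + lam = 0) : ‖z‖ < 1 := by
  set φ := π / (2 * (2 * n + 1)) with hφ
  have hφ₀ : 0 < φ := by positivity
  have hφ_le : φ ≤ π / 2 := div_le_div_of_nonneg_left pi_pos.le two_pos (by nlinarith)
  have hnφ : n * (2 * φ) = π / 2 - φ := by rw [hφ]; field_simp; ring
  by_contra! hz₁
  have hfactor : z ^ n * (1 - z) = lam := by linear_combination -hz
  have hsub : 1 - z ≠ 0 := by
    rintro h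
    rw [h, mul_zero, eq_comm, ofReal_eq_zero] at hfactor
    exact hlam₀.ne' hfactor
  have hdist : ‖z - 1‖ ≤ lam := by
    have := congrArg norm hfactor
    rw [norm_mul, norm_pow, norm_real, Real.norm_of_nonneg hlam₀.le, norm_sub_rev] at this
    nlinarith [one_le_pow₀ (n := n) hz₁, norm_nonneg (z - 1)]
  have hre_le : (z ^ n).re ≤ lam / 2 := by
    rw [eq_div_of_mul_eq hsub hfactor, div_eq_mul_inv, re_ofReal_mul]
    nlinarith [re_inv_one_sub_le_half hz₁]
  have harg := abs_arg_le_two_mul hφ₀.le hφ_le hz₁ (hdist.trans hlam.le)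
  have hcos : Real.sin φ ≤ Real.cos (n * arg z) := by
    rw [← Real.cos_abs, ← Real.cos_pi_div_two_sub]
    refine Real.cos_le_cos_of_nonneg_of_le_pi (abs_nonneg _) (by linarith) ?_
    rw [abs_mul, Nat.abs_cast, ← hnφ]
    exact mul_le_mul_of_nonneg_left harg n.cast_nonneg
  have hsin : 0 < Real.sin φ := Real.sin_pos_of_pos_of_lt_pi hφ₀ (by linarith [pi_pos])
  have hre_ge : Real.sin φ ≤ (z ^ n).re := by
    rw [re_pow_eq_norm_pow_mul_cos]
    nlinarith [one_le_pow₀ (n := n) hz₁]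
  linarith

end Complex

open Real in
theorem stmt_13_general (N : ℕ) (τ : ℕ) (K : Matrix (Fin N) (Fin N) ℝ)
    (heig : ∀ lam : ℝ, (∃ v : Fin N → ℝ, v ≠ 0 ∧ K.mulVec v = lam • v) → lam ≠ 0 →
      0 < lam ∧ lam < 2 * Real.sin (π / (2 * (2 * (τ : ℝ) + 1)))) :
    ∀ lam : ℝ, (∃ v : Fin N → ℝ, v ≠ 0 ∧ K.mulVec v = lam • v) → lam ≠ 0 →
      ∀ z : ℂ, z ^ (τ + 1) - z ^ τ + (lam : ℂ) = 0 → ‖z‖ < 1 := by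
  intro lam hv hne z hz
  obtain ⟨hlam₀, hlam⟩ := heig lam hv hne
  exact Complex.norm_lt_one_of_pow_succ_sub_pow_add_eq_zero hlam₀ hlam hz

open Real in
/-- If K is real symmetric with K𝟙 = 0 and all nonzero eigenvalues λ satisfy
0 < λ < 2 sin(π/(2(2τ+1))), then for each nonzero eigenvalue λ every root z of
z^{τ+1} − z^τ + λ = 0 satisfies |z| < 1. -/
theorem stmt_13 (N : ℕ) (τ : ℕ) (hτ : 1 ≤ τ) (K : Matrix (Fin N) (Fin N) ℝ)
    (hsymm : K.IsSymm) (hones : K.mulVec (fun _ => (1 : ℝ)) = 0)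
    (heig : ∀ lam : ℝ, (∃ v : Fin N → ℝ, v ≠ 0 ∧ K.mulVec v = lam • v) → lam ≠ 0 →
      0 < lam ∧ lam < 2 * Real.sin (π / (2 * (2 * (τ : ℝ) + 1)))) :
    ∀ lam : ℝ, (∃ v : Fin N → ℝ, v ≠ 0 ∧ K.mulVec v = lam • v) → lam ≠ 0 →
      ∀ z : ℂ, z ^ (τ + 1) - z ^ τ + (lam : ℂ) = 0 → ‖z‖ < 1 :=
  stmt_13_general N τ K heig
end
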